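/- arXiv:2208.02719 — 2 statements merged into one kernel-verified Lean document; each statement's English description precedes it below -/
import Mathlib

section
/- Let s be an increasing function on (l,r). Define s_d^+(x) := μ_d^+((0,x)) for x ≥ 0 and −μ_d^+([x,0)) for x < 0, and s_d^-(x) := μ_d^-((0,x]) for x ≥ 0 and −μ_d^-((x,0)) for x < 0, where μ_d^± are the atomic measures of right and left jumps of s. Then s_c := s − s_d^+ − s_d^- is an increasing and continuous function on (l,r). -/
/-!
For `a ≤ b`, `s_c b - s_c a = s b - s a - J(a, b)`, where `J(a, b)` collects the right jumps on
`[a, b)` and the left jumps on `(a, b]`. Finitely many jumps strictly inside `(a, b)` telescope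
against `s(b-) - s(a+)`, so `J(a, b) ≤ s b - s a` and `s_c` is increasing. Since `J(a, b)` contains
the right jump at `a` and the left jump at `b`, the increment of `s_c` is squeezed by
`s b - s(a+)` and by `s(b-) - s a`, which tend to `0` as `b ↓ a`, resp. `a ↑ b`.
-/

open Set Function Filter Topology

section IntervalSums

variable {α E : Type*} [PartialOrder α] [AddCommMonoid E] [TopologicalSpace E] {f : α → E}
  {a b : α}

theorem tsum_Ico_eq_tsum_Ioo_of_apply_eq_zero (h : f a = 0) :
    ∑' y : Ico a b, f y = ∑' y : Ioo a b, f y := by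
  rw [tsum_subtype, tsum_subtype]
  congr 1
  funext y
  rcases eq_or_ne y a with rfl | hy
  · simp [h]
  · by_cases hy' : y ∈ Ioo a b
    · rw [indicator_of_mem hy', indicator_of_mem (Ioo_subset_Ico_self hy')]
    · rw [indicator_of_notMem hy', indicator_of_notMem fun h' => hy' ⟨h'.1.lt_of_ne' hy, h'.2⟩]

theorem tsum_Ioc_eq_tsum_Ioo_of_apply_eq_zero (h : f b = 0) :
    ∑' y : Ioc a b, f y = ∑' y : Ioo a b, f y := by
  rw [tsum_subtype, tsum_subtype]
  congr 1
  funext y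
  rcases eq_or_ne y b with rfl | hy
  · simp [h]
  · by_cases hy' : y ∈ Ioo a b
    · rw [indicator_of_mem hy', indicator_of_mem (Ioo_subset_Ioc_self hy')]
    · rw [indicator_of_notMem hy', indicator_of_notMem fun h' => hy' ⟨h'.1, h'.2.lt_of_ne hy⟩]

variable [T2Space E] [ContinuousAdd E]

theorem tsum_Ico_eq_add_tsum_Ioo (hab : a < b) (hf : Summable fun y : Ioo a b => f y) :
    ∑' y : Ico a b, f y = f a + ∑' y : Ioo a b, f y := by
  rw [← Ioo_insert_left hab, insert_eq,
    Summable.tsum_union_disjoint (f := f) (disjoint_singleton_left.2 (lt_irrefl a ∘ And.left))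
      Summable.of_finite hf, tsum_singleton]

theorem tsum_Ioc_eq_add_tsum_Ioo (hab : a < b) (hf : Summable fun y : Ioo a b => f y) :
    ∑' y : Ioc a b, f y = f b + ∑' y : Ioo a b, f y := by
  rw [← Ioo_insert_right hab, insert_eq,
    Summable.tsum_union_disjoint (f := f) (disjoint_singleton_left.2 (lt_irrefl b ∘ And.right))
      Summable.of_finite hf, tsum_singleton]

end IntervalSums

theorem sub_eq_tsum_of_eq_signed_tsum {α E : Type*} [LinearOrder α] [AddCommGroup E]
    [TopologicalSpace E] [IsTopologicalAddGroup E] [T2Space E] {I : α → α → Set α}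
    (hunion : ∀ {u v w}, u ≤ v → v ≤ w → I u v ∪ I v w = I u w)
    (hdisj : ∀ u v w, Disjoint (I u v) (I v w)) {T : Set α} {f F : α → E} {a b c : α}
    (hsum : ∀ u ∈ T, ∀ v ∈ T, u ≤ v → Summable fun y : I u v => f y)
    (hpos : ∀ x, c ≤ x → F x = ∑' y : I c x, f y)
    (hneg : ∀ x, x < c → F x = -∑' y : I x c, f y)
    (ha : a ∈ T) (hb : b ∈ T) (hc : c ∈ T) (hab : a ≤ b) :
    F b - F a = ∑' y : I a b, f y := by
  have split : ∀ {u v w}, u ∈ T → v ∈ T → w ∈ T → u ≤ v → v ≤ w →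
      ∑' y : I u w, f y = ∑' y : I u v, f y + ∑' y : I v w, f y := by
    intro u v w hu hv hw huv hvw
    rw [← hunion huv hvw]
    exact Summable.tsum_union_disjoint (hdisj u v w) (hsum u hu v hv huv) (hsum v hv w hw hvw)
  rcases le_or_gt c a with hca | hac
  · rw [hpos b (hca.trans hab), hpos a hca, split hc ha hb hca hab]
    abel
  rcases le_or_gt c b with hcb | hbc
  · rw [hpos b hcb, hneg a hac, split ha hc hb hac.le hcb]
    abel
  · rw [hneg b hbc, hneg a hac, split ha hb hc hab hbc.le]
    abel

noncomputable def rightJump (s : ℝ → ℝ) (x : ℝ) : ℝ := rightLim s x - s x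

noncomputable def leftJump (s : ℝ → ℝ) (x : ℝ) : ℝ := s x - leftLim s x

theorem rightJump_add_leftJump (s : ℝ → ℝ) (x : ℝ) :
    rightJump s x + leftJump s x = rightLim s x - leftLim s x :=
  sub_add_sub_cancel _ _ _

/-- `μ_d^+([a, b)) + μ_d^-((a, b])`. -/
noncomputable def jumpSum (s : ℝ → ℝ) (a b : ℝ) : ℝ :=
  ∑' y : Ico a b, rightJump s y + ∑' y : Ioc a b, leftJump s y

namespace MonotoneOn

variable {l r : ℝ} {s : ℝ → ℝ} {a b x y : ℝ}

theorem tendsto_rightLim (hs : MonotoneOn s (Ioo l r)) (hx : x ∈ Ioo l r) :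
    Tendsto s (𝓝[>] x) (𝓝 (rightLim s x)) := by
  have hsub : Ioo x r ⊆ Ioo l r := Ioo_subset_Ioo_left hx.1.le
  have hbdd : BddBelow (s '' Ioo x r) :=
    ⟨s x, forall_mem_image.2 fun y hy => hs hx (hsub hy) hy.1.le⟩
  have h := (hs.mono hsub).tendsto_nhdsWithin_Ioo_right (nonempty_Ioo.2 hx.2) hbdd
  rwa [rightLim_eq_of_tendsto h]

theorem tendsto_leftLim (hs : MonotoneOn s (Ioo l r)) (hx : x ∈ Ioo l r) :
    Tendsto s (𝓝[<] x) (𝓝 (leftLim s x)) := by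
  have hsub : Ioo l x ⊆ Ioo l r := Ioo_subset_Ioo_right hx.2.le
  have hbdd : BddAbove (s '' Ioo l x) :=
    ⟨s x, forall_mem_image.2 fun y hy => hs (hsub hy) hx hy.2.le⟩
  have h := (hs.mono hsub).tendsto_nhdsWithin_Ioo_left (nonempty_Ioo.2 hx.1) hbdd
  rwa [leftLim_eq_of_tendsto h]

theorem self_le_rightLim (hs : MonotoneOn s (Ioo l r)) (hx : x ∈ Ioo l r) :
    s x ≤ rightLim s x :=
  ge_of_tendsto (hs.tendsto_rightLim hx) <| by
    filter_upwards [Ioo_mem_nhdsGT hx.2] with y hy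
    exact hs hx ⟨hx.1.trans hy.1, hy.2⟩ hy.1.le

theorem leftLim_le_self (hs : MonotoneOn s (Ioo l r)) (hx : x ∈ Ioo l r) :
    leftLim s x ≤ s x :=
  le_of_tendsto (hs.tendsto_leftLim hx) <| by
    filter_upwards [Ioo_mem_nhdsLT hx.1] with y hy
    exact hs ⟨hy.1, hy.2.trans hx.2⟩ hx hy.2.le

theorem rightLim_le_leftLim (hs : MonotoneOn s (Ioo l r)) (hx : x ∈ Ioo l r)
    (hy : y ∈ Ioo l r) (hxy : x < y) : rightLim s x ≤ leftLim s y := by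
  obtain ⟨m, hxm, hmy⟩ := exists_between hxy
  have hm : m ∈ Ioo l r := ⟨hx.1.trans hxm, hmy.trans hy.2⟩
  calc rightLim s x ≤ s m :=
        le_of_tendsto (hs.tendsto_rightLim hx) <| by
          filter_upwards [Ioo_mem_nhdsGT hxm] with z hz
          exact hs ⟨hx.1.trans hz.1, hz.2.trans hm.2⟩ hm hz.2.le
    _ ≤ leftLim s y :=
        ge_of_tendsto (hs.tendsto_leftLim hy) <| by
          filter_upwards [Ioo_mem_nhdsLT hmy] with z hz
          exact hs hm ⟨hm.1.trans hz.1, hz.2.trans hy.2⟩ hz.1.le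

theorem rightJump_nonneg (hs : MonotoneOn s (Ioo l r)) (hx : x ∈ Ioo l r) :
    0 ≤ rightJump s x :=
  sub_nonneg.2 (hs.self_le_rightLim hx)

theorem leftJump_nonneg (hs : MonotoneOn s (Ioo l r)) (hx : x ∈ Ioo l r) :
    0 ≤ leftJump s x :=
  sub_nonneg.2 (hs.leftLim_le_self hx)

theorem sum_rightLim_sub_leftLim_le (hs : MonotoneOn s (Ioo l r)) (F : Finset ℝ)
    (ha : a ∈ Ioo l r) (hb : b ∈ Ioo l r) (hab : a < b) (hF : ↑F ⊆ Ioo a b) :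
    ∑ y ∈ F, (rightLim s y - leftLim s y) ≤ leftLim s b - rightLim s a := by
  classical
  induction F using Finset.induction_on_max generalizing b with
  | empty => simpa using hs.rightLim_le_leftLim ha hb hab
  | insert y F hlt ih =>
    have hy : y ∈ Ioo a b := hF (Finset.mem_insert_self y F)
    have hy' : y ∈ Ioo l r := ⟨ha.1.trans hy.1, hy.2.trans hb.2⟩
    have hFy : ↑F ⊆ Ioo a y := fun z hz =>
      ⟨(hF (Finset.mem_insert_of_mem hz)).1, hlt z hz⟩
    rw [Finset.sum_insert fun hyF => (hlt y hyF).false]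
    linarith [ih hy' hy.1 hFy, hs.rightLim_le_leftLim hy' hb hy.2]

theorem sum_subtype_rightLim_sub_leftLim_le (hs : MonotoneOn s (Ioo l r)) {S : Set ℝ}
    (u : Finset S) (ha : a ∈ Ioo l r) (hb : b ∈ Ioo l r) (hab : a < b) (hS : S ⊆ Ioo a b) :
    ∑ y ∈ u, (rightLim s y - leftLim s y) ≤ leftLim s b - rightLim s a := by
  have hmap : ↑(u.map (Embedding.subtype _)) ⊆ Ioo a b := fun y hy => by
    obtain ⟨z, -, rfl⟩ := Finset.mem_map.1 hy
    exact hS z.2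
  simpa using hs.sum_rightLim_sub_leftLim_le _ ha hb hab hmap

theorem summable_rightLim_sub_leftLim (hs : MonotoneOn s (Ioo l r)) {S : Set ℝ}
    (ha : a ∈ Ioo l r) (hb : b ∈ Ioo l r) (hab : a ≤ b) (hS : S ⊆ Icc a b) :
    Summable fun y : S => rightLim s y - leftLim s y := by
  obtain ⟨a', hla', ha'a⟩ := exists_between ha.1
  obtain ⟨b', hbb', hb'r⟩ := exists_between hb.2
  have hS' : S ⊆ Ioo a' b' := fun y hy => ⟨ha'a.trans_le (hS hy).1, (hS hy).2.trans_lt hbb'⟩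
  refine summable_of_sum_le (fun y => ?_) fun u =>
    hs.sum_subtype_rightLim_sub_leftLim_le u ⟨hla', ha'a.trans ha.2⟩ ⟨hb.1.trans hbb', hb'r⟩
      (ha'a.trans (hab.trans_lt hbb')) hS'
  have hy : (y : ℝ) ∈ Ioo l r := ⟨hla'.trans (hS' y.2).1, (hS' y.2).2.trans hb'r⟩
  exact sub_nonneg.2 ((hs.leftLim_le_self hy).trans (hs.self_le_rightLim hy))

theorem summable_rightJump (hs : MonotoneOn s (Ioo l r)) {S : Set ℝ}
    (ha : a ∈ Ioo l r) (hb : b ∈ Ioo l r) (hab : a ≤ b) (hS : S ⊆ Icc a b) :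
    Summable fun y : S => rightJump s y := by
  have hmem (y : S) : (y : ℝ) ∈ Ioo l r := ⟨ha.1.trans_le (hS y.2).1, (hS y.2).2.trans_lt hb.2⟩
  refine (hs.summable_rightLim_sub_leftLim ha hb hab hS).of_nonneg_of_le
    (fun y => hs.rightJump_nonneg (hmem y)) fun y => ?_
  linarith [hs.leftJump_nonneg (hmem y), rightJump_add_leftJump s y]

theorem summable_leftJump (hs : MonotoneOn s (Ioo l r)) {S : Set ℝ}
    (ha : a ∈ Ioo l r) (hb : b ∈ Ioo l r) (hab : a ≤ b) (hS : S ⊆ Icc a b) :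
    Summable fun y : S => leftJump s y := by
  have hmem (y : S) : (y : ℝ) ∈ Ioo l r := ⟨ha.1.trans_le (hS y.2).1, (hS y.2).2.trans_lt hb.2⟩
  refine (hs.summable_rightLim_sub_leftLim ha hb hab hS).of_nonneg_of_le
    (fun y => hs.leftJump_nonneg (hmem y)) fun y => ?_
  linarith [hs.rightJump_nonneg (hmem y), rightJump_add_leftJump s y]

theorem jumpSum_le (hs : MonotoneOn s (Ioo l r)) (ha : a ∈ Ioo l r) (hb : b ∈ Ioo l r)
    (hab : a ≤ b) : jumpSum s a b ≤ s b - s a := by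
  rcases hab.eq_or_lt with rfl | hab
  · simp [jumpSum]
  have hright := hs.summable_rightJump ha hb hab.le Ioo_subset_Icc_self
  have hleft := hs.summable_leftJump ha hb hab.le Ioo_subset_Icc_self
  have hIoo : ∑' y : Ioo a b, rightJump s y + ∑' y : Ioo a b, leftJump s y ≤
      leftLim s b - rightLim s a := by
    rw [← hright.tsum_add hleft]
    refine tsum_le_of_sum_le' (sub_nonneg.2 (hs.rightLim_le_leftLim ha hb hab)) fun u => ?_
    simpa only [rightJump_add_leftJump] using
      hs.sum_subtype_rightLim_sub_leftLim_le u ha hb hab subset_rfl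
  rw [jumpSum, tsum_Ico_eq_add_tsum_Ioo hab hright, tsum_Ioc_eq_add_tsum_Ioo hab hleft]
  simp only [rightJump, leftJump] at hIoo ⊢
  linarith

theorem rightJump_le_jumpSum (hs : MonotoneOn s (Ioo l r)) (ha : a ∈ Ioo l r)
    (hb : b ∈ Ioo l r) (hab : a < b) : rightJump s a ≤ jumpSum s a b := by
  have hmem {y : ℝ} (hy : y ∈ Icc a b) : y ∈ Ioo l r := ⟨ha.1.trans_le hy.1, hy.2.trans_lt hb.2⟩
  rw [jumpSum, tsum_Ico_eq_add_tsum_Ioo hab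
    (hs.summable_rightJump ha hb hab.le Ioo_subset_Icc_self)]
  have hIoo : 0 ≤ ∑' y : Ioo a b, rightJump s y :=
    tsum_nonneg fun y => hs.rightJump_nonneg (hmem (Ioo_subset_Icc_self y.2))
  have hIoc : 0 ≤ ∑' y : Ioc a b, leftJump s y :=
    tsum_nonneg fun y => hs.leftJump_nonneg (hmem (Ioc_subset_Icc_self y.2))
  linarith

theorem leftJump_le_jumpSum (hs : MonotoneOn s (Ioo l r)) (ha : a ∈ Ioo l r)
    (hb : b ∈ Ioo l r) (hab : a < b) : leftJump s b ≤ jumpSum s a b := by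
  have hmem {y : ℝ} (hy : y ∈ Icc a b) : y ∈ Ioo l r := ⟨ha.1.trans_le hy.1, hy.2.trans_lt hb.2⟩
  rw [jumpSum, tsum_Ioc_eq_add_tsum_Ioo hab
    (hs.summable_leftJump ha hb hab.le Ioo_subset_Icc_self)]
  have hIoo : 0 ≤ ∑' y : Ioo a b, leftJump s y :=
    tsum_nonneg fun y => hs.leftJump_nonneg (hmem (Ioo_subset_Icc_self y.2))
  have hIco : 0 ≤ ∑' y : Ico a b, rightJump s y :=
    tsum_nonneg fun y => hs.rightJump_nonneg (hmem (Ico_subset_Icc_self y.2))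
  linarith

theorem continuousOn_of_sub_le_sub_jump (hs : MonotoneOn s (Ioo l r)) {g : ℝ → ℝ}
    (hg : MonotoneOn g (Ioo l r))
    (hright : ∀ x ∈ Ioo l r, ∀ y ∈ Ioo l r, x < y → g y - g x ≤ s y - s x - rightJump s x)
    (hleft : ∀ x ∈ Ioo l r, ∀ y ∈ Ioo l r, x < y → g y - g x ≤ s y - s x - leftJump s y) :
    ContinuousOn g (Ioo l r) := by
  intro x hx
  refine (continuousAt_iff_continuous_left'_right'.2 ⟨?_, ?_⟩).continuousWithinAt
  · have hlow : Tendsto (fun y => g x - (leftLim s x - s y)) (𝓝[<] x) (𝓝 (g x)) := by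
      simpa using (tendsto_const_nhds (x := g x)).sub
        ((tendsto_const_nhds (x := leftLim s x)).sub (hs.tendsto_leftLim hx))
    refine tendsto_of_tendsto_of_tendsto_of_le_of_le' hlow tendsto_const_nhds ?_ ?_ <;>
      filter_upwards [Ioo_mem_nhdsLT hx.1] with y hy <;>
      have hy' : y ∈ Ioo l r := ⟨hy.1, hy.2.trans hx.2⟩
    · linarith [hleft y hy' x hx hy.2, show leftJump s x = s x - leftLim s x from rfl]
    · exact hg hy' hx hy.2.le
  · have hup : Tendsto (fun y => g x + (s y - rightLim s x)) (𝓝[>] x) (𝓝 (g x)) := by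
      simpa using (tendsto_const_nhds (x := g x)).add
        ((hs.tendsto_rightLim hx).sub (tendsto_const_nhds (x := rightLim s x)))
    refine tendsto_of_tendsto_of_tendsto_of_le_of_le' tendsto_const_nhds hup ?_ ?_ <;>
      filter_upwards [Ioo_mem_nhdsGT hx.2] with y hy <;>
      have hy' : y ∈ Ioo l r := ⟨hx.1.trans hy.1, hy.2⟩
    · exact hg hx hy' hy.1.le
    · linarith [hright x hx y hy' hy.1, show rightJump s x = rightLim s x - s x from rfl]

end MonotoneOn

/-- For an increasing function `s` on `(l,r)` with `s(0-) = s(0) = s(0+) = 0`, subtracting the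
accumulated right jumps `s_d^+` and left jumps `s_d^-` yields a function
`s_c = s - s_d^+ - s_d^-` that is increasing and continuous on `(l,r)`. -/
theorem stmt3 (l r : ℝ) (hl : l < 0) (hr : 0 < r) (s : ℝ → ℝ)
    (hs : MonotoneOn s (Set.Ioo l r))
    (h0m : Function.leftLim s 0 = 0) (h00 : s 0 = 0) (h0p : Function.rightLim s 0 = 0)
    (sdp sdm : ℝ → ℝ)
    (hsdp1 : ∀ x : ℝ, 0 ≤ x →
      sdp x = ∑' y : Set.Ioo (0:ℝ) x, (Function.rightLim s y - s y))
    (hsdp2 : ∀ x : ℝ, x < 0 →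
      sdp x = -∑' y : Set.Ico x (0:ℝ), (Function.rightLim s y - s y))
    (hsdm1 : ∀ x : ℝ, 0 ≤ x →
      sdm x = ∑' y : Set.Ioc (0:ℝ) x, (s y - Function.leftLim s y))
    (hsdm2 : ∀ x : ℝ, x < 0 →
      sdm x = -∑' y : Set.Ioo x (0:ℝ), (s y - Function.leftLim s y)) :
    MonotoneOn (fun x => s x - sdp x - sdm x) (Set.Ioo l r) ∧
    ContinuousOn (fun x => s x - sdp x - sdm x) (Set.Ioo l r) := by
  have h0 : (0 : ℝ) ∈ Ioo l r := ⟨hl, hr⟩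
  -- Both jumps vanish at `0`, so `0` may be added to the index sets of `sdp` and `sdm`.
  have hdp : ∀ a ∈ Ioo l r, ∀ b ∈ Ioo l r, a ≤ b →
      sdp b - sdp a = ∑' y : Ico a b, rightJump s y := fun a ha b hb hab =>
    sub_eq_tsum_of_eq_signed_tsum Ico_union_Ico_eq_Ico (fun _ _ _ => Ico_disjoint_Ico_same)
      (fun u hu v hv huv => hs.summable_rightJump hu hv huv Ico_subset_Icc_self)
      (fun x hx => (hsdp1 x hx).trans
        (tsum_Ico_eq_tsum_Ioo_of_apply_eq_zero (f := rightJump s)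
          (by simp [rightJump, h0p, h00])).symm)
      hsdp2 ha hb h0 hab
  have hdm : ∀ a ∈ Ioo l r, ∀ b ∈ Ioo l r, a ≤ b →
      sdm b - sdm a = ∑' y : Ioc a b, leftJump s y := fun a ha b hb hab =>
    sub_eq_tsum_of_eq_signed_tsum Ioc_union_Ioc_eq_Ioc
      (fun _ _ _ => Ioc_disjoint_Ioc_of_le le_rfl)
      (fun u hu v hv huv => hs.summable_leftJump hu hv huv Ioc_subset_Icc_self) hsdm1
      (fun x hx => (hsdm2 x hx).trans <| congrArg Neg.neg
        (tsum_Ioc_eq_tsum_Ioo_of_apply_eq_zero (f := leftJump s)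
          (by simp [leftJump, h0m, h00])).symm)
      ha hb h0 hab
  have hinc : ∀ a ∈ Ioo l r, ∀ b ∈ Ioo l r, a ≤ b →
      (s b - sdp b - sdm b) - (s a - sdp a - sdm a) = s b - s a - jumpSum s a b := by
    intro a ha b hb hab
    rw [jumpSum, ← hdp a ha b hb hab, ← hdm a ha b hb hab]
    ring
  have hmono : MonotoneOn (fun x => s x - sdp x - sdm x) (Ioo l r) := fun a ha b hb hab => by
    linarith [hinc a ha b hb hab, hs.jumpSum_le ha hb hab]
  refine ⟨hmono, hs.continuousOn_of_sub_le_sub_jump hmono (fun x hx y hy hxy => ?_)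
    fun x hx y hy hxy => ?_⟩
  · linarith [hinc x hx y hy hxy.le, hs.rightJump_le_jumpSum hx hy hxy]
  · linarith [hinc x hx y hy hxy.le, hs.leftJump_le_jumpSum hx hy hxy]
end

section
/- Let X be a Hunt process on a nearly closed subset E of the extended reals with the skip-free property: for all t < ζ, the open interval between X_{t-} and X_t contains no point of E, almost surely. Then: given states x, y, z ∈ E with x < y < z, times u < s, if X_u = x and X_s = z, then almost surely there exists t ∈ (u, s] such that X_t = y or X_{t-} = y. -/
open MeasureTheory Filter Topology Set

/-- A (simplified) skip-free Hunt process on a nearly closed subset `E` of the extended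
reals: a family of probability laws `P x` for `x ∈ E`, a càdlàg path process `X` with left
limit process `Xm` and lifetime `ζ`, satisfying the skip-free property (SF), the regularity
property (SR) and the no-killing-inside property (SK). -/
structure SkipFreeHuntProcess where
  /-- the state space, a nearly closed subset of the extended reals -/
  E : Set EReal
  nearlyClosed : IsClosed (E ∪ {sInf E, sSup E})
  /-- sample space -/
  Ω : Type
  mΩ : MeasurableSpace Ω
  /-- the law of the process started from `x` -/
  P : EReal → Measure Ω
  prob : ∀ x ∈ E, IsProbabilityMeasure (P x)
  /-- sample paths -/
  X : ℝ → Ω → EReal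
  /-- left-limit process `t ↦ X_{t-}` -/
  Xm : ℝ → Ω → EReal
  /-- lifetime -/
  ζ : Ω → ENNReal
  start : ∀ x ∈ E, ∀ᵐ ω ∂ P x, X 0 ω = x
  rightCont : ∀ ω : Ω, ∀ t : ℝ, 0 ≤ t →
    Tendsto (fun s => X s ω) (𝓝[>] t) (𝓝 (X t ω))
  leftLimit : ∀ ω : Ω, ∀ t : ℝ, 0 < t →
    Tendsto (fun s => X s ω) (𝓝[<] t) (𝓝 (Xm t ω))
  stateIn : ∀ x ∈ E, ∀ᵐ ω ∂ P x, ∀ t : ℝ, 0 ≤ t → ENNReal.ofReal t < ζ ω → X t ω ∈ E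
  /-- (SF) skip-free property -/
  skipFree : ∀ x ∈ E, ∀ᵐ ω ∂ P x, ∀ t : ℝ, 0 ≤ t → ENNReal.ofReal t < ζ ω →
    Set.Ioo (min (Xm t ω) (X t ω)) (max (Xm t ω) (X t ω)) ∩ E = ∅
  /-- (SR) regularity -/
  regular : ∀ x ∈ E, ∀ y ∈ E, 0 < P x {ω | ∃ t : ℝ, 0 < t ∧ X t ω = y}
  /-- (SK) no killing inside -/
  noKilling : ∀ x ∈ E, 0 < P x {ω | ζ ω < ⊤} →
    (sInf E ∉ E ∨ sSup E ∉ E) ∧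
    P x {ω | ζ ω < ⊤ ∧ Xm (ζ ω).toReal ω ∉ E} = P x {ω | ζ ω < ⊤}

/-- the hitting time `T_y = inf{t > 0 : X_t = y}` (with `inf ∅ = ∞`). -/
noncomputable def SkipFreeHuntProcess.hitTime (H : SkipFreeHuntProcess) (y : EReal)
    (ω : H.Ω) : ENNReal :=
  sInf (ENNReal.ofReal '' {t : ℝ | 0 < t ∧ H.X t ω = y})


/-- the entrance time `T_{≤y} = inf{t > 0 : X_t ≤ y}` of `(-∞,y]`. -/
noncomputable def SkipFreeHuntProcess.hitTimeLe (H : SkipFreeHuntProcess) (y : EReal)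
    (ω : H.Ω) : ENNReal :=
  sInf (ENNReal.ofReal '' {t : ℝ | 0 < t ∧ H.X t ω ≤ y})

/-- the exit time `T_{≠x} = inf{t > 0 : X_t ≠ x}`. -/
noncomputable def SkipFreeHuntProcess.hitTimeNe (H : SkipFreeHuntProcess) (x : EReal)
    (ω : H.Ω) : ENNReal :=
  sInf (ENNReal.ofReal '' {t : ℝ | 0 < t ∧ H.X t ω ≠ x})

/-!
Let `t` be the supremum of the times in `[u, s]` at which `X ≤ y`. Right-continuity gives
`X_t ≥ y`, and unless `X_t = y` the left limit satisfies `X_{t-} ≤ y < X_t`; the skip-free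
property then forces `X_{t-} = y`.
-/

section CrossingLevel

variable {α : Type*} [LinearOrder α] [TopologicalSpace α] [OrderClosedTopology α]
  {f : ℝ → α} {y : α}

theorem le_of_tendsto_nhdsLT_csSup {A : Set ℝ} {l : α} (hne : A.Nonempty) (hbdd : BddAbove A)
    (hA : sSup A ∉ A) (hle : ∀ a ∈ A, f a ≤ y) (hf : Tendsto f (𝓝[<] sSup A) (𝓝 l)) :
    l ≤ y := by
  refine isClosed_Iic.mem_of_frequently_of_tendsto ?_ hf
  rw [frequently_iff]
  intro U hU
  obtain ⟨b, hb, hbU⟩ := mem_nhdsLT_iff_exists_Ioo_subset.mp hU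
  obtain ⟨a, haA, hba⟩ := exists_lt_of_lt_csSup hne hb
  have has : a < sSup A := (le_csSup hbdd haA).lt_of_ne fun h => hA (h ▸ haA)
  exact ⟨a, hbU ⟨hba, has⟩, hle a haA⟩

theorem le_of_forall_Ioc_lt_of_tendsto_nhdsGT {t s : ℝ} (hts : t ≤ s)
    (hrc : t < s → Tendsto f (𝓝[>] t) (𝓝 (f t))) (hs : y ≤ f s)
    (hgt : ∀ r ∈ Ioc t s, y < f r) : y ≤ f t := by
  rcases hts.lt_or_eq with hts | rfl
  · refine ge_of_tendsto (hrc hts) ?_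
    filter_upwards [Ioo_mem_nhdsGT hts] with r hr
    exact (hgt r ⟨hr.1, hr.2.le⟩).le
  · exact hs

theorem exists_crossing_time {g : ℝ → α} {u s : ℝ} (hus : u < s)
    (hrc : ∀ t ∈ Ico u s, Tendsto f (𝓝[>] t) (𝓝 (f t)))
    (hll : ∀ t ∈ Ioc u s, Tendsto f (𝓝[<] t) (𝓝 (g t)))
    (hu : f u < y) (hs : y ≤ f s) :
    ∃ t ∈ Ioc u s, f t = y ∨ (g t ≤ y ∧ y < f t) := by
  set A : Set ℝ := {r | r ∈ Icc u s ∧ f r ≤ y}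
  have huA : u ∈ A := ⟨⟨le_rfl, hus.le⟩, hu.le⟩
  have hbdd : BddAbove A := ⟨s, fun r hr => hr.1.2⟩
  set t := sSup A
  have hut : u ≤ t := le_csSup hbdd huA
  have hts : t ≤ s := csSup_le ⟨u, huA⟩ fun r hr => hr.1.2
  have hgt (r : ℝ) (hr : r ∈ Ioc t s) : y < f r :=
    lt_of_not_ge fun h => hr.1.not_ge (le_csSup hbdd ⟨⟨hut.trans hr.1.le, hr.2⟩, h⟩)
  have hyt : y ≤ f t :=
    le_of_forall_Ioc_lt_of_tendsto_nhdsGT hts (fun h => hrc t ⟨hut, h⟩) hs hgt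
  have hut : u < t := hut.lt_of_ne fun h => hu.not_ge (h ▸ hyt)
  refine ⟨t, ⟨hut, hts⟩, ?_⟩
  by_cases htA : t ∈ A
  · exact Or.inl (htA.2.antisymm hyt)
  · exact Or.inr ⟨le_of_tendsto_nhdsLT_csSup ⟨u, huA⟩ hbdd htA (fun a ha => ha.2)
      (hll t ⟨hut, hts⟩), lt_of_not_ge fun h => htA ⟨⟨hut.le, hts⟩, h⟩⟩

end CrossingLevel

theorem stmt7_general (H : SkipFreeHuntProcess) (x y z : EReal)
    (hy : y ∈ H.E) (hxy : x < y) (hyz : y < z)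
    (w : EReal) (hw : w ∈ H.E) (u s : ℝ) (hu : 0 ≤ u) (hus : u < s) :
    ∀ᵐ ω ∂ H.P w,
      (H.X u ω = x ∧ H.X s ω = z ∧ ENNReal.ofReal s < H.ζ ω) →
        ∃ t : ℝ, u < t ∧ t ≤ s ∧ (H.X t ω = y ∨ H.Xm t ω = y) := by
  filter_upwards [H.skipFree w hw] with ω hsf
  rintro ⟨rfl, rfl, hζ⟩
  obtain ⟨t, ⟨hut, hts⟩, hcross⟩ := exists_crossing_time hus
    (fun t ht => H.rightCont ω t (hu.trans ht.1)) (fun t ht => H.leftLimit ω t (hu.trans_lt ht.1))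
    hxy hyz.le
  refine ⟨t, hut, hts, ?_⟩
  rcases hcross with hXt | ⟨hXmt, hXt⟩
  · exact Or.inl hXt
  refine Or.inr (hXmt.eq_of_not_lt fun hXmt => ?_)
  have hjump := hsf t (hu.trans hut.le) ((ENNReal.ofReal_le_ofReal hts).trans_lt hζ)
  exact hjump.subset ⟨⟨(min_le_left _ _).trans_lt hXmt, hXt.trans_le (le_max_right _ _)⟩, hy⟩

/-- Skip-free consequence: if `x < y < z` in `E` and the process is at `x` at time `u` and at
`z` at a later time `s` (before the lifetime), then almost surely there is a time
`t ∈ (u,s]` at which `X_t = y` or `X_{t-} = y`. -/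
theorem stmt7 (H : SkipFreeHuntProcess) (x y z : EReal)
    (hx : x ∈ H.E) (hy : y ∈ H.E) (hz : z ∈ H.E) (hxy : x < y) (hyz : y < z)
    (w : EReal) (hw : w ∈ H.E) (u s : ℝ) (hu : 0 ≤ u) (hus : u < s) :
    ∀ᵐ ω ∂ H.P w,
      (H.X u ω = x ∧ H.X s ω = z ∧ ENNReal.ofReal s < H.ζ ω) →
        ∃ t : ℝ, u < t ∧ t ≤ s ∧ (H.X t ω = y ∨ H.Xm t ω = y) :=
  stmt7_general H x y z hy hxy hyz w hw u s hu hus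
end
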